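/- arXiv:0710.0010 — 2 statements merged into one kernel-verified Lean document; each statement's English description precedes it below -/
import Mathlib

section
/- The (N+1)×(N+1) Hilbert matrix H, with entries H i j = 1/(i+j+1) (0-based indices), is invertible, and its inverse has entries (H⁻¹) i j = (-1)^(i+j) · (i+j+1) · C(N+1+i, N-j) · C(N+1+j, N-i) · C(i+j, i)². -/
/-!
The Hilbert matrix is the Cauchy matrix `(x k + y j)⁻¹` with `x k = k` and `y j = j + 1`.
A Cauchy matrix has an explicit left inverse: write the Lagrange basis polynomial `ℓᵢ` of the
nodes `y` in first barycentric form with respect to the nodes `-x k`, and evaluate it at `y j`: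
`δᵢⱼ = ℓᵢ (y j) = a (y j) * ∑ k, w k * ℓᵢ (-x k) / (x k + y j)`, where `a = ∏ k, (X + x k)` and
`w k` are the barycentric weights. Dividing by `a (y j)`, which is `a (y i)` when `i = j`, the
`(i, k)` entry is `a (y i) * w k * ℓᵢ (-x k)`. For the Hilbert matrix each of these three factors
is a signed ratio of factorials, and they combine into the binomial formula.
-/

open Finset Polynomial Lagrange

section Cauchy

variable {F ι : Type*} [Field F] [DecidableEq ι] {s : Finset ι} {x y : ι → F}

noncomputable def cauchyInverse (s : Finset ι) (x y : ι → F) (i k : ι) : F :=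
  (nodal s (fun m => -x m)).eval (y i) * nodalWeight s (fun m => -x m) k *
    (Lagrange.basis s y i).eval (-x k)

theorem sum_cauchyInverse_mul_inv_add (hx : Set.InjOn x s) (hy : Set.InjOn y s)
    (hxy : ∀ k ∈ s, ∀ j ∈ s, x k + y j ≠ 0) {i j : ι} (hi : i ∈ s) (hj : j ∈ s) :
    ∑ k ∈ s, cauchyInverse s x y i k * (x k + y j)⁻¹ = if i = j then 1 else 0 := by
  have hnode : ∀ j ∈ s, ∀ k ∈ s, y j ≠ -x k := fun j hj k hk h =>
    hxy k hk j hj (by rw [h, add_neg_cancel])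
  have hdeg : (Lagrange.basis s y i).degree < #s := by
    rw [degree_basis hy hi]
    exact_mod_cast Nat.sub_lt (card_pos.mpr ⟨i, hi⟩) one_pos
  have bary : (Lagrange.basis s y i).eval (y j) =
      (nodal s (fun m => -x m)).eval (y j) * ∑ k ∈ s,
        nodalWeight s (fun m => -x m) k * (x k + y j)⁻¹ * (Lagrange.basis s y i).eval (-x k) := by
    conv_lhs => rw [eq_interpolate (v := fun m => -x m) (neg_injective.comp_injOn hx) hdeg]
    rw [eval_interpolate_not_at_node _ (hnode j hj)]
    simp only [sub_neg_eq_add, add_comm (y j)]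
  have hnodal : ∀ j ∈ s, (nodal s (fun m => -x m)).eval (y j) ≠ 0 := fun j hj =>
    eval_nodal_not_at_node (hnode j hj)
  calc ∑ k ∈ s, cauchyInverse s x y i k * (x k + y j)⁻¹
      = (nodal s (fun m => -x m)).eval (y i) * ∑ k ∈ s,
        nodalWeight s (fun m => -x m) k * (x k + y j)⁻¹ * (Lagrange.basis s y i).eval (-x k) := by
        rw [mul_sum]
        refine sum_congr rfl fun k _ => ?_
        rw [cauchyInverse]
        ring
    _ = (nodal s (fun m => -x m)).eval (y i) * ((Lagrange.basis s y i).eval (y j) /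
        (nodal s (fun m => -x m)).eval (y j)) := by
        rw [bary, mul_div_cancel_left₀ _ (hnodal j hj)]
    _ = if i = j then 1 else 0 := by
        split_ifs with hij
        · subst hij
          rw [eval_basis_self hy hi, mul_one_div_cancel (hnodal i hi)]
        · rw [eval_basis_of_ne hij hj, zero_div, mul_zero]

end Cauchy

section Hilbert

open Nat

section CommRing

variable {R : Type*} [CommRing R]

theorem prod_range_natCast_sub_self (k : ℕ) :
    ∏ m ∈ range k, ((m : R) - k) = (-1) ^ k * k ! := by
  calc ∏ m ∈ range k, ((m : R) - k) = ∏ m ∈ range k, (((k - 1 - m : ℕ) : R) - k) :=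
        (prod_range_reflect _ k).symm
    _ = ∏ m ∈ range k, (-1) * ((m : R) + 1) := prod_congr rfl fun m hm => by
        rw [Nat.sub_sub, Nat.cast_sub (by rw [mem_range] at hm; omega)]
        push_cast
        ring
    _ = (-1) ^ k * k ! := by
        rw [prod_mul_distrib, prod_const, card_range, ← prod_range_add_one_eq_factorial]
        push_cast
        rfl

theorem prod_range_erase_natCast_sub {n k : ℕ} (hk : k ≤ n) :
    ∏ m ∈ (range (n + 1)).erase k, ((m : R) - k) = (-1) ^ k * k ! * (n - k)! := by
  induction n, hk using Nat.le_induction with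
  | base =>
    rw [range_add_one, erase_insert notMem_range_self, prod_range_natCast_sub_self, Nat.sub_self,
      factorial_zero, cast_one, mul_one]
  | succ n hkn ih =>
    rw [range_add_one, erase_insert_of_ne (by omega), prod_insert (by simp), ih,
      Nat.succ_sub hkn, factorial_succ]
    push_cast [Nat.cast_sub hkn]
    ring

end CommRing

section Field

variable {K : Type*} [Field K]

theorem nodalWeight_range_neg_natCast {n k : ℕ} (hk : k ≤ n) :
    nodalWeight (range (n + 1)) (fun m : ℕ => -(m : K)) k = (-1) ^ k / (k ! * (n - k)!) := by
  rw [nodalWeight, prod_inv_distrib]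
  simp only [neg_sub_neg]
  rw [prod_range_erase_natCast_sub hk, mul_assoc, mul_inv, ← inv_pow, inv_neg_one, div_eq_mul_inv]

theorem eval_basis_natCast_add_one_neg (s : Finset ℕ) (i k : ℕ) :
    (Lagrange.basis s (fun m : ℕ => (m : K) + 1) i).eval (-(k : K)) =
      (∏ m ∈ s.erase i, ((k : K) + m + 1)) * nodalWeight s (fun m : ℕ => -(m : K)) i := by
  rw [Lagrange.basis, eval_prod, nodalWeight, ← prod_mul_distrib]
  refine prod_congr rfl fun m _ => ?_
  rw [basisDivisor, eval_mul, eval_C, eval_sub, eval_X, eval_C,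
    show -(i : K) - -m = -((i + 1) - (m + 1)) by ring, inv_neg]
  ring

variable [CharZero K]

theorem prod_range_natCast_add_add_one (a n : ℕ) :
    ∏ m ∈ range n, ((a : K) + m + 1) = (a + n)! / a ! := by
  rw [eq_div_iff (mod_cast factorial_ne_zero a), ← factorial_mul_ascFactorial,
    ascFactorial_eq_prod_range]
  push_cast
  rw [mul_comm]
  congr 1
  exact prod_congr rfl fun m _ => by ring

theorem prod_range_erase_natCast_add_add_one (a : ℕ) {n i : ℕ} (hi : i < n) :
    ∏ m ∈ (range n).erase i, ((a : K) + m + 1) = (a + n)! / a ! / (a + i + 1) := by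
  rw [eq_div_iff (mod_cast succ_ne_zero (a + i)), ← prod_range_natCast_add_add_one, mul_comm,
    mul_prod_erase _ (fun m : ℕ => (a : K) + m + 1) (mem_range.mpr hi)]

theorem cauchyInverse_range_natCast_eq {N i k : ℕ} (hi : i ≤ N) (hk : k ≤ N) :
    cauchyInverse (range (N + 1)) (fun m : ℕ => (m : K)) (fun m => (m : K) + 1) i k =
      (-1) ^ (i + k) * ((i : K) + k + 1) * (N + 1 + i).choose (N - k) *
        (N + 1 + k).choose (N - i) * ((i + k).choose i : K) ^ 2 := by
  rw [cauchyInverse, eval_nodal, eval_basis_natCast_add_one_neg,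
    prod_range_erase_natCast_add_add_one _ (by omega : i < N + 1),
    nodalWeight_range_neg_natCast hi, nodalWeight_range_neg_natCast hk]
  simp only [sub_neg_eq_add, add_right_comm (i : K) 1]
  rw [prod_range_natCast_add_add_one, Nat.cast_choose K (show N - k ≤ N + 1 + i by omega),
    Nat.cast_choose K (show N - i ≤ N + 1 + k by omega),
    Nat.cast_choose K (show i ≤ i + k by omega),
    show N + 1 + i - (N - k) = i + k + 1 by omega, show N + 1 + k - (N - i) = i + k + 1 by omega,
    show i + k - i = k by omega, add_comm i (N + 1), add_comm k (N + 1), factorial_succ, pow_add]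
  have : (i : K) + k + 1 ≠ 0 := mod_cast succ_ne_zero (i + k)
  have : ((i + k)! : K) ≠ 0 := mod_cast factorial_ne_zero (i + k)
  push_cast
  rw [add_comm (k : K) i]
  field_simp

theorem sum_cauchyInverse_range_natCast_mul_inv {N i j : ℕ} (hi : i ≤ N) (hj : j ≤ N) :
    ∑ k ∈ range (N + 1), cauchyInverse (range (N + 1)) (fun m : ℕ => (m : K))
      (fun m => (m : K) + 1) i k * ((k : K) + j + 1)⁻¹ = if i = j then 1 else 0 := by
  have hy : Set.InjOn (fun m : ℕ => (m : K) + 1) (range (N + 1)) := fun a _ b _ h => by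
    exact_mod_cast add_right_cancel h
  have hxy (k j : ℕ) : (k : K) + ((j : K) + 1) ≠ 0 := mod_cast succ_ne_zero (k + j)
  simp_rw [add_assoc]
  exact sum_cauchyInverse_mul_inv_add Nat.cast_injective.injOn hy (fun k _ j _ => hxy k j)
    (mem_range_succ_iff.mpr hi) (mem_range_succ_iff.mpr hj)

end Field

end Hilbert

theorem stmt7 (N : ℕ) (H : Matrix (Fin (N + 1)) (Fin (N + 1)) ℝ)
    (hH : ∀ i j : Fin (N + 1), H i j = 1 / ((i : ℝ) + (j : ℝ) + 1)) :
    IsUnit H.det ∧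
      ∀ i j : Fin (N + 1), H⁻¹ i j =
        (-1 : ℝ) ^ ((i : ℕ) + (j : ℕ)) * ((i : ℕ) + (j : ℕ) + 1) *
          (Nat.choose (N + 1 + i) (N - j)) * (Nat.choose (N + 1 + j) (N - i)) *
          (Nat.choose ((i : ℕ) + (j : ℕ)) i) ^ 2 := by
  set B : Matrix (Fin (N + 1)) (Fin (N + 1)) ℝ := Matrix.of fun i k =>
    cauchyInverse (range (N + 1)) (fun m : ℕ => (m : ℝ)) (fun m => (m : ℝ) + 1) i k
  have hBH : B * H = 1 := by
    ext i j
    simp only [Matrix.mul_apply, B, Matrix.of_apply, hH, one_div]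
    rw [Fin.sum_univ_eq_sum_range (fun k => cauchyInverse (range (N + 1)) (fun m : ℕ => (m : ℝ))
      (fun m => (m : ℝ) + 1) i k * ((k : ℝ) + j + 1)⁻¹),
      sum_cauchyInverse_range_natCast_mul_inv i.is_le j.is_le, Matrix.one_apply]
    simp only [Fin.val_inj]
  refine ⟨Matrix.isUnit_det_of_left_inverse hBH, fun i j => ?_⟩
  rw [Matrix.inv_eq_left_inv hBH]
  exact cauchyInverse_range_natCast_eq i.is_le j.is_le
end

section
/- Let y(t) = Σ_{i=0}^{N} (aᵢ/i!)·tⁱ be a polynomial of degree at most N. For T > 0, t ≥ T, and 0 ≤ j ≤ N, the convolution ∫₀^T G_j(T,σ)·y(t-σ) dσ equals the j-th derivative y^{(j)}(t), where G_j(T,σ) = ((N+j+1)!/(T^{j+1}·j!·(N-j)!)) · Σ_{k=0}^{N} ((-1)^k·(N+k+1)!/((j+k+1)·(N-k)!·(k!)²)) · (σ/T)^k. -/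
/-!
Taylor-expanding the polynomial `y` around `t` gives
`y (t - σ) = ∑_{μ ≤ N} y^{(μ)}(t) (-σ)^μ / μ!`, so it suffices that the kernel `G_j` has the
moments `∫₀^T G_j(σ) σ^μ dσ = (-1)^j j! δ_{μj}` for `μ ≤ N`. Integrating term by term reduces
this to the identity
`∑_k (-1)^k (N+k+1)! / ((j+k+1)(μ+k+1)(N-k)! k!²) = δ_{μj} (-1)^j j!² (N-j)! / (N+j+1)!`.
Since `(N+k+1)!/k! = ∏_{i ≤ N} (k+1+i)`, the left side is an alternating binomial sum
`∑_k (-1)^k C(N,k) Q(k) / (k + μ + 1) / N!` with `Q = ∏_{i ≠ j} (X + i + 1)` of degree `N`.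
Such a sum equals `Q(-(μ+1)) · N! / ∏_{i ≤ N} (μ+1+i)`: the polynomial part of
`Q(k)/(k+μ+1)` has degree `< N`, so its `N`-th finite difference vanishes, and the `N`-th finite
difference of `1/x` is explicit. Finally `Q(-(μ+1)) = 0` unless `μ = j`.
-/

open Finset Polynomial fwdDiff

theorem sum_range_neg_one_pow_mul_choose_mul_eq_fwdDiff_iter {R : Type*} [CommRing R]
    (f : R → R) (n : ℕ) (y : R) :
    ∑ k ∈ range (n + 1), (-1 : R) ^ k * n.choose k * f (y + k) = (-1) ^ n * Δ_[1] ^[n] f y := by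
  rw [fwdDiff_iter_eq_sum_shift, mul_sum]
  refine sum_congr rfl fun k hk => ?_
  obtain ⟨d, rfl⟩ := Nat.exists_eq_add_of_le (mem_range_succ_iff.mp hk)
  simp only [Nat.add_sub_cancel_left, zsmul_eq_mul, nsmul_one, Int.cast_mul, Int.cast_pow,
    Int.cast_neg, Int.cast_one, Int.cast_natCast]
  rw [pow_add, ← mul_assoc, ← mul_assoc, mul_assoc _ _ ((-1 : R) ^ d), ← pow_add, ← two_mul,
    pow_mul]
  simp

theorem Polynomial.sum_range_neg_one_pow_mul_choose_mul_eval_eq_zero {R : Type*} [CommRing R]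
    {n : ℕ} {P : R[X]} (hP : P.natDegree < n) :
    ∑ k ∈ range (n + 1), (-1 : R) ^ k * n.choose k * P.eval (k : R) = 0 := by
  simpa [fwdDiff_iter_eq_zero_of_degree_lt hP] using
    sum_range_neg_one_pow_mul_choose_mul_eq_fwdDiff_iter (fun x => P.eval x) n 0

section OrderedField

variable {K : Type*} [Field K] [LinearOrder K] [IsStrictOrderedRing K]

theorem fwdDiff_iter_inv (n : ℕ) {a : K} (ha : 0 < a) :
    Δ_[1] ^[n] (fun x : K => x⁻¹) a = (-1) ^ n * n.factorial / ∏ i ∈ range (n + 1), (a + i) := by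
  induction n generalizing a with
  | zero => simp
  | succ n ih =>
    have hprod_left : ∏ i ∈ range (n + 2), (a + i) = a * ∏ i ∈ range (n + 1), (a + 1 + i) := by
      rw [prod_range_succ', mul_comm]
      push_cast
      simp [add_assoc, add_comm (1 : K)]
    have hprod_right := prod_range_succ (fun i : ℕ => a + i) (n + 1)
    have h₀ : 0 < ∏ i ∈ range (n + 1), (a + i) := prod_pos fun i _ => by positivity
    have h₁ : 0 < ∏ i ∈ range (n + 1), (a + 1 + i) := prod_pos fun i _ => by positivity
    rw [Function.iterate_succ_apply', fwdDiff, ih ha, ih (by positivity), hprod_left]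
    rw [hprod_left] at hprod_right
    field_simp
    rw [Nat.factorial_succ]
    push_cast at hprod_right ⊢
    linear_combination (-(-1) ^ n * (n.factorial : K)) * hprod_right

theorem sum_range_neg_one_pow_mul_choose_div (n : ℕ) {a : K} (ha : 0 < a) :
    ∑ k ∈ range (n + 1), (-1 : K) ^ k * n.choose k / (a + k) =
      n.factorial / ∏ i ∈ range (n + 1), (a + i) := by
  have h := sum_range_neg_one_pow_mul_choose_mul_eq_fwdDiff_iter (fun x : K => x⁻¹) n a
  rw [fwdDiff_iter_inv n ha, ← mul_div_assoc, ← mul_assoc, ← pow_add, ← two_mul, pow_mul] at h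
  simpa [div_eq_mul_inv] using h

theorem Polynomial.sum_range_neg_one_pow_mul_choose_mul_eval_div {n : ℕ} {F : K[X]}
    (hF : F.natDegree ≤ n) {a : K} (ha : 0 < a) :
    ∑ k ∈ range (n + 1), (-1 : K) ^ k * n.choose k * F.eval (k : K) / (a + k) =
      F.eval (-a) * (n.factorial / ∏ i ∈ range (n + 1), (a + i)) := by
  obtain ⟨R, hR⟩ := X_sub_C_dvd_sub_C_eval (p := F) (a := -a)
  have hsplit (k : ℕ) : F.eval (k : K) / (a + k) = F.eval (-a) / (a + k) + R.eval (k : K) := by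
    have hk := congrArg (eval (k : K)) hR
    simp only [eval_sub, eval_C, eval_mul, eval_X] at hk
    have : a + k ≠ 0 := by positivity
    field_simp
    linear_combination hk
  have hR_sum : ∑ k ∈ range (n + 1), (-1 : K) ^ k * n.choose k * R.eval (k : K) = 0 := by
    rcases eq_or_ne R 0 with rfl | hR0
    · simp
    apply sum_range_neg_one_pow_mul_choose_mul_eval_eq_zero
    have := congrArg natDegree hR
    rw [natDegree_mul (X_sub_C_ne_zero _) hR0, natDegree_X_sub_C, natDegree_sub_C] at this
    omega
  simp_rw [mul_div_assoc, hsplit, mul_add, sum_add_distrib]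
  rw [hR_sum, add_zero, ← sum_range_neg_one_pow_mul_choose_div n ha, mul_sum]
  exact sum_congr rfl fun k _ => by ring

end OrderedField

theorem prod_range_erase_natCast_sub_s9 {R : Type*} [CommRing R] {N j : ℕ} (hj : j ≤ N) :
    ∏ i ∈ (range (N + 1)).erase j, ((i : R) - j) = (-1) ^ j * j.factorial * (N - j).factorial := by
  have hsplit : (range (N + 1)).erase j = range j ∪ Ico (j + 1) (N + 1) := by
    ext i
    simp only [mem_erase, mem_range, mem_union, mem_Ico]
    omega
  have hdisj : Disjoint (range j) (Ico (j + 1) (N + 1)) := by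
    simp only [disjoint_left, mem_range, mem_Ico]
    omega
  have hbelow : ∏ i ∈ range j, ((i : R) - j) = (-1) ^ j * j.factorial := by
    have hfact := descPochhammer_eval_eq_descFactorial R j j
    rw [descPochhammer_eval_eq_prod_range, Nat.descFactorial_self] at hfact
    have hneg := prod_neg (s := range j) fun i : ℕ => (j : R) - i
    rw [card_range, hfact] at hneg
    rw [← hneg]
    exact prod_congr rfl fun i _ => (neg_sub (j : R) i).symm
  have habove : ∏ i ∈ Ico (j + 1) (N + 1), ((i : R) - j) = (N - j).factorial := by
    rw [prod_Ico_eq_prod_range, show N + 1 - (j + 1) = N - j by omega,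
      ← prod_range_add_one_eq_factorial]
    push_cast
    exact prod_congr rfl fun i _ => by ring
  rw [hsplit, prod_union hdisj, hbelow, habove]

theorem Polynomial.iteratedDeriv_eval {𝕜 : Type*} [NontriviallyNormedField 𝕜] (n : ℕ)
    (p : 𝕜[X]) : iteratedDeriv n (fun x => p.eval x) = fun x => (derivative^[n] p).eval x := by
  induction n generalizing p with
  | zero => simp
  | succ n ih =>
    have hderiv : _root_.deriv (fun x => p.eval x) = fun x => p.derivative.eval x := by
      funext x
      exact p.deriv
    rw [iteratedDeriv_succ', hderiv, ih, Function.iterate_succ_apply]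

theorem Polynomial.eval_sub_eq_sum_hasseDeriv {R : Type*} [CommRing R] {p : R[X]} {n : ℕ}
    (hp : p.natDegree < n) (t s : R) :
    p.eval (t - s) = ∑ μ ∈ range n, (hasseDeriv μ p).eval t * (-s) ^ μ := by
  rw [sub_eq_neg_add, ← taylor_eval, eval_eq_sum_range' ((natDegree_taylor p t).symm ▸ hp)]
  simp only [taylor_coeff]

theorem integral_mul_eval_sub_eq_eval_iterate_derivative {g : ℝ → ℝ} (hg : Continuous g)
    {N j : ℕ} (hj : j ≤ N) {T : ℝ}
    (hmoments : ∀ μ ≤ N, ∫ σ in (0 : ℝ)..T, g σ * σ ^ μ =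
      if μ = j then (-1) ^ j * (j.factorial : ℝ) else 0)
    {p : ℝ[X]} (hp : p.natDegree ≤ N) (t : ℝ) :
    ∫ σ in (0 : ℝ)..T, g σ * p.eval (t - σ) = (derivative^[j] p).eval t := by
  have hterm (μ : ℕ) (hμ : μ ∈ range (N + 1)) :
      ∫ σ in (0 : ℝ)..T, g σ * ((hasseDeriv μ p).eval t * (-σ) ^ μ) =
        (hasseDeriv μ p).eval t * (-1) ^ μ *
          if μ = j then (-1) ^ j * (j.factorial : ℝ) else 0 := by
    rw [← hmoments μ (mem_range_succ_iff.mp hμ), ← intervalIntegral.integral_const_mul]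
    exact intervalIntegral.integral_congr fun σ _ => by simp only [neg_pow σ]; ring
  simp_rw [eval_sub_eq_sum_hasseDeriv (Nat.lt_succ_of_le hp), mul_sum]
  rw [intervalIntegral.integral_finsetSum fun μ _ => by
      exact (hg.mul (continuous_const.mul (continuous_neg.pow μ))).intervalIntegrable _ _,
    sum_congr rfl hterm]
  simp only [mul_ite, mul_zero, sum_ite_eq', mem_range, Nat.lt_succ_of_le hj, if_true]
  have hsign : (-1 : ℝ) ^ j * (-1) ^ j = 1 := by rw [← pow_add, Even.neg_one_pow ⟨j, rfl⟩]
  rw [← factorial_smul_hasseDeriv, LinearMap.smul_apply, eval_smul, nsmul_eq_mul]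
  linear_combination ((hasseDeriv j p).eval t * j.factorial) * hsign

noncomputable def derivKernelCoeff (N j k : ℕ) : ℝ :=
  (-1 : ℝ) ^ k * ((N + k + 1).factorial : ℝ) /
    ((j + k + 1) * ((N - k).factorial : ℝ) * (k.factorial : ℝ) ^ 2)

/-- The paper's kernel `G_j(T, σ)`. -/
noncomputable def derivKernel (N j : ℕ) (T σ : ℝ) : ℝ :=
  (((N + j + 1).factorial : ℝ) / (T ^ (j + 1) * j.factorial * (N - j).factorial)) *
    ∑ k ∈ range (N + 1), derivKernelCoeff N j k * (σ / T) ^ k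

theorem continuous_derivKernel (N j : ℕ) (T : ℝ) : Continuous (derivKernel N j T) := by
  unfold derivKernel
  fun_prop

theorem factorial_add_add_one_eq_mul_prod_erase {N j : ℕ} (hj : j ≤ N) (k : ℕ) :
    ((N + k + 1).factorial : ℝ) =
      k.factorial * (((k : ℝ) + (j + 1)) * ∏ i ∈ (range (N + 1)).erase j, ((k : ℝ) + (i + 1))) := by
  rw [mul_prod_erase _ (fun i : ℕ => (k : ℝ) + (i + 1)) (mem_range.mpr (by omega : j < N + 1)),
    show N + k + 1 = k + (N + 1) by ring, ← Nat.factorial_mul_ascFactorial,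
    Nat.ascFactorial_eq_prod_range]
  push_cast
  exact congrArg _ (prod_congr rfl fun i _ => by ring)

theorem sum_derivKernelCoeff_div {N j m : ℕ} (hj : j ≤ N) (hm : m ≤ N) :
    ∑ k ∈ range (N + 1), derivKernelCoeff N j k / (m + k + 1) =
      if m = j then (-1) ^ j * (j.factorial : ℝ) ^ 2 * (N - j).factorial / (N + j + 1).factorial
      else 0 := by
  set Q : ℝ[X] := ∏ i ∈ (range (N + 1)).erase j, (X + C ((i : ℝ) + 1)) with hQ
  have hQ_eval (x : ℝ) : Q.eval x = ∏ i ∈ (range (N + 1)).erase j, (x + (i + 1)) := by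
    simp [hQ, eval_prod]
  have hQ_deg : Q.natDegree ≤ N := by
    rw [hQ, natDegree_prod _ _ fun i _ => X_add_C_ne_zero _]
    simp only [natDegree_X_add_C, sum_const, smul_eq_mul, mul_one,
      card_erase_of_mem (mem_range.mpr (by omega : j < N + 1)), card_range, Nat.add_sub_cancel,
      le_refl]
  have hterm (k : ℕ) (hk : k ∈ range (N + 1)) : derivKernelCoeff N j k / (m + k + 1) =
      (-1 : ℝ) ^ k * N.choose k * Q.eval (k : ℝ) / ((m + 1 : ℝ) + k) / N.factorial := by
    rw [derivKernelCoeff, factorial_add_add_one_eq_mul_prod_erase hj, hQ_eval,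
      Nat.cast_choose ℝ (mem_range_succ_iff.mp hk)]
    field_simp
    ring
  rw [sum_congr rfl hterm, ← sum_div,
    sum_range_neg_one_pow_mul_choose_mul_eval_div hQ_deg (by positivity : (0 : ℝ) < m + 1),
    hQ_eval]
  split_ifs with hmj
  · subst hmj
    have hnodes : ∏ i ∈ (range (N + 1)).erase m, (-(m + 1 : ℝ) + (i + 1)) =
        (-1) ^ m * m.factorial * (N - m).factorial := by
      rw [← prod_range_erase_natCast_sub_s9 hm]
      exact prod_congr rfl fun i _ => by ring
    have hasc := Nat.factorial_mul_ascFactorial m (N + 1)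
    rw [Nat.ascFactorial_eq_prod_range, show m + (N + 1) = N + m + 1 by ring] at hasc
    have hasc' : (m.factorial : ℝ) * ∏ i ∈ range (N + 1), ((m + 1 : ℝ) + i) =
        (N + m + 1).factorial := by exact_mod_cast hasc
    rw [hnodes, ← hasc']
    field_simp
  · rw [prod_eq_zero (i := m) (mem_erase.mpr ⟨hmj, mem_range.mpr (by omega)⟩) (by ring),
      zero_mul, zero_div]

theorem integral_derivKernel_mul_pow {N j μ : ℕ} (hj : j ≤ N) (hμ : μ ≤ N) {T : ℝ} (hT : 0 < T) :
    ∫ σ in (0 : ℝ)..T, derivKernel N j T σ * σ ^ μ =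
      if μ = j then (-1) ^ j * (j.factorial : ℝ) else 0 := by
  set A : ℝ := (N + j + 1).factorial / (T ^ (j + 1) * j.factorial * (N - j).factorial) with hA
  have hexpand : (fun σ => derivKernel N j T σ * σ ^ μ) =
      fun σ => ∑ k ∈ range (N + 1), A * derivKernelCoeff N j k / T ^ k * σ ^ (k + μ) := by
    funext σ
    rw [derivKernel, mul_assoc, sum_mul, mul_sum]
    exact sum_congr rfl fun k _ => by rw [div_pow, pow_add]; ring
  have hintegrated : ∑ k ∈ range (N + 1), A * derivKernelCoeff N j k / T ^ k *
      ((T ^ (k + μ + 1) - 0 ^ (k + μ + 1)) / ((k + μ : ℕ) + 1)) =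
      A * T ^ (μ + 1) * ∑ k ∈ range (N + 1), derivKernelCoeff N j k / (μ + k + 1) := by
    rw [mul_sum]
    refine sum_congr rfl fun k _ => ?_
    rw [zero_pow (by omega), sub_zero, pow_add, pow_add]
    push_cast
    field_simp
    ring
  rw [hexpand, intervalIntegral.integral_finsetSum fun k _ => by
    exact (continuous_const.mul (continuous_pow _)).intervalIntegrable _ _]
  simp_rw [intervalIntegral.integral_const_mul, integral_pow]
  rw [hintegrated, sum_derivKernelCoeff_div hj hμ]
  split_ifs with hμj
  · subst hμj
    rw [hA]
    field_simp
  · rw [mul_zero]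

theorem stmt9_general (N : ℕ) (a : Fin (N + 1) → ℝ) (y : ℝ → ℝ)
    (hy : ∀ s, y s = ∑ i : Fin (N + 1), a i / (i : ℕ).factorial * s ^ (i : ℕ))
    (j : ℕ) (hj : j ≤ N) (T t : ℝ) (hT : 0 < T) :
    ∫ σ in (0:ℝ)..T,
        (((N + j + 1).factorial : ℝ) / (T ^ (j + 1) * j.factorial * (N - j).factorial)) *
          (∑ k ∈ Finset.range (N + 1),
            ((-1 : ℝ) ^ k * ((N + k + 1).factorial : ℝ) /
                ((j + k + 1) * ((N - k).factorial : ℝ) * (k.factorial : ℝ) ^ 2)) *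
              (σ / T) ^ k) * y (t - σ) =
      iteratedDeriv j y t := by
  set p : ℝ[X] := ∑ i : Fin (N + 1), C (a i / (i : ℕ).factorial) * X ^ (i : ℕ)
  have hyp : y = fun s => p.eval s := funext fun s => by simp [p, hy, eval_finsetSum]
  have hp : p.natDegree ≤ N := natDegree_sum_le_of_forall_le _ _ fun i _ =>
    (natDegree_C_mul_X_pow_le _ _).trans (Nat.lt_succ_iff.mp i.isLt)
  rw [hyp, iteratedDeriv_eval]
  exact integral_mul_eval_sub_eq_eval_iterate_derivative (continuous_derivKernel N j T) hj
    (fun μ hμ => integral_derivKernel_mul_pow hj hμ hT) hp t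

theorem stmt9 (N : ℕ) (a : Fin (N + 1) → ℝ) (y : ℝ → ℝ)
    (hy : ∀ s, y s = ∑ i : Fin (N + 1), a i / (i : ℕ).factorial * s ^ (i : ℕ))
    (j : ℕ) (hj : j ≤ N) (T t : ℝ) (hT : 0 < T) (ht : T ≤ t) :
    ∫ σ in (0:ℝ)..T,
        (((N + j + 1).factorial : ℝ) / (T ^ (j + 1) * j.factorial * (N - j).factorial)) *
          (∑ k ∈ Finset.range (N + 1),
            ((-1 : ℝ) ^ k * ((N + k + 1).factorial : ℝ) /
                ((j + k + 1) * ((N - k).factorial : ℝ) * (k.factorial : ℝ) ^ 2)) *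
              (σ / T) ^ k) * y (t - σ) =
      iteratedDeriv j y t :=
  stmt9_general N a y hy j hj T t hT
end
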